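/- If a language L ⊆ Σ^ω is recognized by an ω-congruence of finite index, i.e., an equivalence relation ~ on Σ* satisfying conditions (1) and (2) of the ω-congruence definition, then L is ω-regular (recognizable by a Büchi automaton). -/

import Mathlib

open Filter

variable {A : Type*}

/-- The interval coded by `p` occupies positions `p.1, …, p.1 + p.2 - 1` (length `p.2 > 0`). -/
def IntervalLt (p q : ℕ × ℕ) : Prop := p.1 + p.2 ≤ q.1

def IntervalDisj (p q : ℕ × ℕ) : Prop := p.1 + p.2 ≤ q.1 ∨ q.1 + q.2 ≤ p.1

def prefixList (u : ℕ → List A) (m : ℕ) : List A := (List.range m).flatMap u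

/-- Prepending a finite word to an ω-word. -/
def prepend (w : List A) (x : ℕ → A) : ℕ → A := fun n =>
  if h : n < w.length then w.get ⟨n, h⟩ else x (n - w.length)

open Classical in
/-- The infinite concatenation `u 0 · u 1 · u 2 ⋯` of a sequence of finite words, as an
ω-word; meaningful when infinitely many of the `u i` are nonempty. -/
noncomputable def omegaConcat [Inhabited A] (u : ℕ → List A) : ℕ → A := fun n =>
  if h : ∃ m, n < (prefixList u m).length
  then (prefixList u (Nat.find h)).getD n default
  else default

/-- The ω-power `v^ω` of a finite word; meaningful when `v ≠ []`. -/
noncomputable def omegaPow [Inhabited A] (v : List A) : ℕ → A := fun n =>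
  v.getD (n % v.length) default

/-- Infinitely many of the words `u i` are nonempty. -/
def InfOftenNonempty (u : ℕ → List A) : Prop := ∀ n, ∃ m, n ≤ m ∧ u m ≠ []

/-- A relation on finite words has finite index (finitely many classes). -/
def FiniteIndex (r : List A → List A → Prop) : Prop :=
  (Set.range fun w => {v | r w v}).Finite

/-- Compatibility with concatenation. -/
def ConcatCongr (r : List A → List A → Prop) : Prop :=
  ∀ u₁ u₁' u₂ u₂' : List A, r u₁ u₁' → r u₂ u₂' → r (u₁ ++ u₂) (u₁' ++ u₂')

/-- The relation `r` recognizes `L`: relating the blocks of two infinite concatenations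
pointwise preserves membership in `L`. -/
def Recognizes [Inhabited A] (r : List A → List A → Prop) (L : Set (ℕ → A)) : Prop :=
  ∀ u u' : ℕ → List A, InfOftenNonempty u → InfOftenNonempty u' →
    (∀ i, r (u i) (u' i)) → (omegaConcat u ∈ L ↔ omegaConcat u' ∈ L)

/-- Nondeterministic Büchi automaton. -/
structure BuchiAutomaton (A : Type*) where
  Q : Type
  finQ : Finite Q
  init : Set Q
  step : Q → A → Set Q
  acc : Set Q

def BuchiAutomaton.Accepts (M : BuchiAutomaton A) (x : ℕ → A) : Prop :=
  ∃ ρ : ℕ → M.Q, ρ 0 ∈ M.init ∧ (∀ n, ρ (n + 1) ∈ M.step (ρ n) (x n)) ∧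
    ∀ n, ∃ m, n ≤ m ∧ ρ m ∈ M.acc

def OmegaRegular (L : Set (ℕ → A)) : Prop :=
  ∃ M : BuchiAutomaton A, ∀ x, x ∈ L ↔ M.Accepts x

/-- ω-words over `{a, b}` (with `a = true`, `b = false`) of the form `a^{k₁} b a^{k₂} b ⋯`
whose blocks of `a`'s have unbounded size. -/
def Uset : Set (ℕ → Bool) :=
  {x | (∀ n, ∃ m, n ≤ m ∧ x m = false) ∧ ∀ n, ∃ k, ∀ i < n, x (k + i) = true}

/-! Write `φ` for the projection of words onto the finite quotient monoid of the congruence. By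
Ramsey's theorem, in its ultrafilter form, every ω-word cuts into blocks `v₀ v₁ v₂ ⋯` with
`φ v₀ = u` and `φ vₖ = e` for all `k ≥ 1`, for some pair `(u, e)`. Two words with such
factorizations for the same pair are blockwise congruent, so one lies in `L` iff the other does.
Hence `L` is the finite union, over the pairs realised by some word of `L`, of the words with a
`(u, e)`-factorization, and a Büchi automaton accepts these by guessing the cuts while tracking `φ`
of the current block. -/

section Segments

variable (x : ℕ → A)

def seg (i j : ℕ) : List A := (List.range' i (j - i)).map x

@[simp] theorem length_seg (i j : ℕ) : (seg x i j).length = j - i := by simp [seg]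

@[simp] theorem seg_self (i : ℕ) : seg x i i = [] := by simp [seg]

@[simp] theorem getElem_seg {i j n : ℕ} (h : n < (seg x i j).length) :
    (seg x i j)[n] = x (i + n) := by
  simp [seg]

theorem seg_append {i j k : ℕ} (hij : i ≤ j) (hjk : j ≤ k) :
    seg x i j ++ seg x j k = seg x i k := by
  obtain ⟨a, rfl⟩ := Nat.exists_eq_add_of_le hij
  obtain ⟨b, rfl⟩ := Nat.exists_eq_add_of_le hjk
  simp only [seg, ← List.map_append, Nat.add_sub_cancel_left, List.range'_append_1, Nat.add_assoc,
    Nat.add_sub_add_left]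

theorem seg_succ {i n : ℕ} (h : i ≤ n) : seg x i (n + 1) = seg x i n ++ [x n] := by
  rw [← seg_append x h n.le_succ]
  simp [seg]

theorem prefixList_succ (u : ℕ → List A) (m : ℕ) :
    prefixList u (m + 1) = prefixList u m ++ u m := by
  simp [prefixList, List.range_succ]

theorem prefixList_prefix (u : ℕ → List A) {m m' : ℕ} (h : m ≤ m') :
    prefixList u m <+: prefixList u m' := by
  induction m', h using Nat.le_induction with
  | base => exact List.prefix_rfl
  | succ m' _ ih => exact ih.trans (prefixList_succ u m' ▸ List.prefix_append _ _)

theorem omegaConcat_eq_getD [Inhabited A] (u : ℕ → List A) {m n : ℕ}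
    (h : n < (prefixList u m).length) : omegaConcat u n = (prefixList u m).getD n default := by
  have hex : ∃ m, n < (prefixList u m).length := ⟨m, h⟩
  rw [omegaConcat, dif_pos hex, List.getD_eq_getElem _ _ (Nat.find_spec hex),
    List.getD_eq_getElem _ _ h]
  rcases le_total (Nat.find hex) m with hle | hle
  · exact (prefixList_prefix u hle).getElem _
  · exact ((prefixList_prefix u hle).getElem _).symm

theorem prefixList_seg {t : ℕ → ℕ} (ht : Monotone t) (m : ℕ) :
    prefixList (fun k => seg x (t k) (t (k + 1))) m = seg x (t 0) (t m) := by
  induction m with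
  | zero => simp [prefixList]
  | succ m ih => rw [prefixList_succ, ih, seg_append x (ht m.zero_le) (ht m.le_succ)]

theorem omegaConcat_seg [Inhabited A] {t : ℕ → ℕ} (ht : StrictMono t) (h0 : t 0 = 0) :
    omegaConcat (fun k => seg x (t k) (t (k + 1))) = x := by
  funext n
  have hlen : n < (seg x (t 0) (t (n + 1))).length := by
    simpa [h0] using ht.le_apply (x := n + 1)
  rw [omegaConcat_eq_getD _ (prefixList_seg x ht.monotone (n + 1) ▸ hlen),
    prefixList_seg x ht.monotone, List.getD_eq_getElem _ _ hlen, getElem_seg, h0, Nat.zero_add]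

theorem infOftenNonempty_seg {t : ℕ → ℕ} (ht : StrictMono t) :
    InfOftenNonempty fun k => seg x (t k) (t (k + 1)) := fun n =>
  ⟨n, le_rfl, List.ne_nil_of_length_pos (by simpa using ht n.lt_succ_self)⟩

end Segments

theorem Ultrafilter.exists_eventually_eq {α C : Type*} [Finite C] (U : Ultrafilter α)
    (f : α → C) : ∃ c, ∀ᶠ a in U, f a = c :=
  U.eventually_exists_iff.1 (.of_forall fun a => ⟨f a, rfl⟩)

theorem exists_strictMono_forall_color_eq {C : Type*} [Finite C] (c : ℕ → ℕ → C) :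
    ∃ (γ : C) (p : ℕ → ℕ), StrictMono p ∧ ∀ k, c (p k) (p (k + 1)) = γ := by
  let U := hyperfilter ℕ
  -- `f i` is the colour of `U`-almost every edge out of `i`; the path stays in the `U`-large set
  -- of vertices `i` with `f i = γ`.
  choose f hf using fun i => U.exists_eventually_eq (c i)
  obtain ⟨γ, hγ⟩ := U.exists_eventually_eq f
  have hnext : ∀ i, ∃ j, f i = γ → f j = γ ∧ i < j ∧ c i j = γ := fun i =>
    (hγ.and ((hf i).and (Nat.hyperfilter_le_atTop (eventually_gt_atTop i)))).exists.imp
      fun j hj hi => ⟨hj.1, hj.2.2, hj.2.1.trans hi⟩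
  choose g hg using hnext
  obtain ⟨i₀, hi₀⟩ := hγ.exists
  have hgood : ∀ k, f (g^[k] i₀) = γ := fun k => by
    induction k with
    | zero => exact hi₀
    | succ k ih => rw [Function.iterate_succ_apply']; exact (hg _ ih).1
  refine ⟨γ, fun k => g^[k] i₀, strictMono_nat_of_lt_succ fun k => ?_, fun k => ?_⟩
  · rw [Function.iterate_succ_apply']; exact (hg _ (hgood k)).2.1
  · show c (g^[k] i₀) (g^[k + 1] i₀) = γ
    rw [Function.iterate_succ_apply']; exact (hg _ (hgood k)).2.2

theorem StrictMono.eq_of_le_of_lt_succ {t : ℕ → ℕ} (ht : StrictMono t) {n k k' : ℕ}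
    (h₁ : t k ≤ n) (h₂ : n < t (k + 1)) (h₁' : t k' ≤ n) (h₂' : n < t (k' + 1)) : k = k' := by
  have := ht.lt_iff_lt.1 (h₁.trans_lt h₂')
  have := ht.lt_iff_lt.1 (h₁'.trans_lt h₂)
  omega

theorem StrictMono.exists_le_and_lt_succ {t : ℕ → ℕ} (ht : StrictMono t) (h0 : t 0 = 0) (n : ℕ) :
    ∃ k, t k ≤ n ∧ n < t (k + 1) := by
  induction n with
  | zero => exact ⟨0, h0.le, by simpa [h0] using ht (Nat.lt_succ_self 0)⟩
  | succ n ih =>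
    obtain ⟨k, h₁, h₂⟩ := ih
    rcases (Nat.succ_le_of_lt h₂).lt_or_eq with hlt | heq
    · exact ⟨k, by omega, hlt⟩
    · exact ⟨k + 1, heq.ge, by have := ht (Nat.lt_add_one (k + 1)); omega⟩

section Factorization

variable {M : Type*} [Monoid M] (φ : FreeMonoid A →* M)

theorem map_seg_succ (x : ℕ → A) {i n : ℕ} (h : i ≤ n) :
    φ (.ofList (seg x i (n + 1))) = φ (.ofList (seg x i n)) * φ (.of (x n)) := by
  rw [seg_succ x h, FreeMonoid.ofList_append, map_mul, FreeMonoid.ofList_singleton]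

def IsFactorization (u e : M) (x : ℕ → A) : Prop :=
  ∃ t : ℕ → ℕ, StrictMono t ∧ t 0 = 0 ∧
    ∀ k, φ (.ofList (seg x (t k) (t (k + 1)))) = if k = 0 then u else e

theorem exists_isFactorization [Finite M] (x : ℕ → A) : ∃ u e, IsFactorization φ u e x := by
  obtain ⟨e, p, hp, hpe⟩ := exists_strictMono_forall_color_eq fun i j => φ (.ofList (seg x i j))
  let t : ℕ → ℕ := fun k => if k = 0 then 0 else p k
  refine ⟨φ (.ofList (seg x 0 (p 1))), e, t, strictMono_nat_of_lt_succ fun k => ?_, rfl,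
    fun k => ?_⟩
  · rcases k with _ | k
    · simpa [t] using (Nat.zero_le _).trans_lt (hp zero_lt_one)
    · simpa [t] using hp (k + 1).lt_succ_self
  · rcases k with _ | k <;> simp [t, hpe]

end Factorization

section Buchi

variable {S T : Type*}

def BuchiAccepts (init : Set S) (step : S → A → Set S) (acc : Set S) (x : ℕ → A) : Prop :=
  ∃ ρ : ℕ → S, ρ 0 ∈ init ∧ (∀ n, ρ (n + 1) ∈ step (ρ n) (x n)) ∧ ∀ n, ∃ m, n ≤ m ∧ ρ m ∈ acc

theorem buchiAccepts_comap_equiv (f : T ≃ S) (init : Set S) (step : S → A → Set S) (acc : Set S)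
    (x : ℕ → A) :
    BuchiAccepts (f ⁻¹' init) (fun q a => f ⁻¹' step (f q) a) (f ⁻¹' acc) x ↔
      BuchiAccepts init step acc x := by
  constructor
  · rintro ⟨ρ, h0, hs, ha⟩
    exact ⟨f ∘ ρ, h0, hs, ha⟩
  · rintro ⟨ρ, h0, hs, ha⟩
    exact ⟨f.symm ∘ ρ, by simpa using h0, fun n => by simpa using hs n, by simpa using ha⟩

theorem OmegaRegular.of_buchiAccepts [Finite S] {L : Set (ℕ → A)} (init : Set S)
    (step : S → A → Set S) (acc : Set S) (h : ∀ x, x ∈ L ↔ BuchiAccepts init step acc x) :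
    OmegaRegular L := by
  obtain ⟨n, ⟨f⟩⟩ := Finite.exists_equiv_fin S
  exact ⟨⟨Fin n, inferInstance, f.symm ⁻¹' init, fun q a => f.symm ⁻¹' step (f.symm q) a,
    f.symm ⁻¹' acc⟩, fun x => (h x).trans (buchiAccepts_comap_equiv f.symm init step acc x).symm⟩

theorem buchiAccepts_prod_iff {ι : Type*} (init : ι → Set S) (step : ι → S → A → Set S)
    (acc : ι → Set S) (x : ℕ → A) :
    BuchiAccepts {s : ι × S | s.2 ∈ init s.1} (fun s a => {s' | s'.1 = s.1 ∧ s'.2 ∈ step s.1 s.2 a})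
        {s | s.2 ∈ acc s.1} x ↔
      ∃ i, BuchiAccepts (init i) (step i) (acc i) x := by
  constructor
  · rintro ⟨ρ, h0, hs, ha⟩
    have hconst : ∀ n, (ρ n).1 = (ρ 0).1 := fun n => by
      induction n with
      | zero => rfl
      | succ n ih => exact (hs n).1.trans ih
    refine ⟨(ρ 0).1, fun n => (ρ n).2, h0, fun n => hconst n ▸ (hs n).2, fun n => ?_⟩
    obtain ⟨m, hm, hacc⟩ := ha n
    exact ⟨m, hm, hconst m ▸ hacc⟩
  · rintro ⟨i, ρ, h0, hs, ha⟩
    exact ⟨fun n => (i, ρ n), h0, fun n => ⟨rfl, hs n⟩, ha⟩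

end Buchi

section CutAutomaton

variable {M : Type*} [Monoid M] (φ : FreeMonoid A →* M)

/-- A state `(τ, m, b)` records the value `τ` the current block must reach, the value `m` of the
part of it read so far, and whether the current position is a cut. -/
def cutStep (e : M) (s : M × M × Bool) (a : A) : Set (M × M × Bool) :=
  {s' | s' = (s.1, s.2.1 * φ (.of a), false) ∨ (s.2.1 * φ (.of a) = s.1 ∧ s' = (e, 1, true))}

variable {φ} {u e : M} {x : ℕ → A}

theorem IsFactorization.buchiAccepts (hx : IsFactorization φ u e x) :
    BuchiAccepts {(u, 1, true)} (cutStep φ e) {s | s.2.2 = true} x := by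
  obtain ⟨t, ht, h0, hblock⟩ := hx
  choose κ hκ using ht.exists_le_and_lt_succ h0
  have hκ_eq {n k : ℕ} (h₁ : t k ≤ n) (h₂ : n < t (k + 1)) : κ n = k :=
    ht.eq_of_le_of_lt_succ (hκ n).1 (hκ n).2 h₁ h₂
  refine ⟨fun n => (if κ n = 0 then u else e, φ (.ofList (seg x (t (κ n)) n)),
    decide (t (κ n) = n)), ?_, fun n => ?_, fun n => ⟨t (n + 1), ?_, ?_⟩⟩
  · have : κ 0 = 0 := hκ_eq h0.le (by simpa [h0] using ht (Nat.lt_add_one 0))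
    simp [this, h0]
  · obtain ⟨h₁, h₂⟩ := hκ n
    rcases (show n + 1 ≤ t (κ n + 1) by omega).lt_or_eq with hlt | heq
    · have : κ (n + 1) = κ n := hκ_eq (by omega) hlt
      left
      simp only [this, map_seg_succ φ x h₁, Prod.mk.injEq, true_and, decide_eq_false_iff_not]
      omega
    · have : κ (n + 1) = κ n + 1 := hκ_eq heq.ge (by have := ht (Nat.lt_add_one (κ n + 1)); omega)
      right
      refine ⟨?_, ?_⟩
      · rw [← map_seg_succ φ x h₁, heq, hblock]
      · simp only [this, ← heq]
        simp
  · exact (Nat.le_succ n).trans ht.le_apply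
  · simp [hκ_eq le_rfl (ht (Nat.lt_add_one (n + 1)))]

section Run

variable {ρ : ℕ → M × M × Bool} (hρ : ∀ n, ρ (n + 1) ∈ cutStep φ e (ρ n) (x n))
include hρ

theorem cutStep_run_of_forall_not_cut {i n : ℕ} {τ : M} (hi : ρ i = (τ, 1, true)) (hin : i ≤ n)
    (hcut : ∀ m, i < m → m ≤ n → (ρ m).2.2 = false) :
    (ρ n).1 = τ ∧ (ρ n).2.1 = φ (.ofList (seg x i n)) := by
  induction n, hin using Nat.le_induction with
  | base => simp [hi]
  | succ n hin ih =>
    obtain ⟨hτ, hm⟩ := ih fun m h₁ h₂ => hcut m h₁ (by omega)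
    rcases hρ n with h | ⟨-, h⟩
    · rw [h, map_seg_succ φ x hin, hm, hτ]
      exact ⟨rfl, rfl⟩
    · simpa [h] using hcut (n + 1) (by omega) le_rfl

theorem cutStep_run_next_cut {i j : ℕ} {τ : M} (hi : ρ i = (τ, 1, true)) (hij : i < j)
    (hcut : ∀ m, i < m → m < j → (ρ m).2.2 = false) (hj : (ρ j).2.2 = true) :
    φ (.ofList (seg x i j)) = τ ∧ ρ j = (e, 1, true) := by
  obtain ⟨n, rfl⟩ : ∃ n, j = n + 1 := ⟨j - 1, by omega⟩
  have hin : i ≤ n := by omega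
  obtain ⟨hτ, hm⟩ :=
    cutStep_run_of_forall_not_cut hρ hi hin fun m h₁ h₂ => hcut m h₁ (by omega)
  rcases hρ n with h | ⟨hval, h⟩
  · simp [h] at hj
  · rw [map_seg_succ φ x hin, ← hm, ← hτ]
    exact ⟨hval, h⟩

end Run

theorem IsFactorization.of_buchiAccepts
    (h : BuchiAccepts {(u, 1, true)} (cutStep φ e) {s | s.2.2 = true} x) :
    IsFactorization φ u e x := by
  obtain ⟨ρ, h0, hρ, hacc⟩ := h
  rw [Set.mem_singleton_iff] at h0
  have hinf : (Set.ofPred fun n => (ρ n).2.2 = true).Infinite :=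
    Set.infinite_of_forall_exists_gt fun n =>
      let ⟨m, hm, hm'⟩ := hacc (n + 1)
      ⟨m, hm', by omega⟩
  set t := Nat.nth fun n => (ρ n).2.2 = true
  have ht : StrictMono t := Nat.nth_strictMono hinf
  have ht0 : t 0 = 0 := Nat.nth_zero_of_zero (by rw [h0])
  have hblock (k : ℕ) {τ : M} (hk : ρ (t k) = (τ, 1, true)) :
      φ (.ofList (seg x (t k) (t (k + 1)))) = τ ∧ ρ (t (k + 1)) = (e, 1, true) :=
    cutStep_run_next_cut hρ hk (ht (Nat.lt_add_one k))
      (fun m h₁ h₂ => Bool.not_eq_true _ ▸ fun hm =>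
        absurd (Nat.le_nth_of_lt_nth_succ h₂ hm) h₁.not_ge)
      (Nat.nth_mem_of_infinite hinf _)
  have hcut (k : ℕ) : ρ (t (k + 1)) = (e, 1, true) := by
    induction k with
    | zero => exact (hblock 0 (τ := u) (by rwa [ht0])).2
    | succ k ih => exact (hblock (k + 1) ih).2
  refine ⟨t, ht, ht0, fun k => ?_⟩
  rcases k with _ | k
  · exact (hblock 0 (τ := u) (by rwa [ht0])).1
  · exact (hblock (k + 1) (hcut k)).1

end CutAutomaton

section Congruence

variable (r : List A → List A → Prop) (hequiv : Equivalence r) (hcong : ConcatCongr r)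

def concatCon : Con (FreeMonoid A) where
  r w v := r w.toList v.toList
  iseqv := ⟨fun _ => hequiv.refl _, hequiv.symm, hequiv.trans⟩
  mul' h₁ h₂ := hcong _ _ _ _ h₁ h₂

theorem finite_concatCon_quotient (hfin : FiniteIndex r) :
    Finite (concatCon r hequiv hcong).Quotient := by
  have : Finite (Set.range fun w : List A => {v | r w v}) := hfin.to_subtype
  refine .of_equiv _ ((Quotient.congrRight fun w w' => ?_).trans
    (Setoid.quotientKerEquivRange fun w : List A => {v | r w v})).symm
  refine ⟨fun h => Set.ext fun v => ⟨hequiv.trans (hequiv.symm h), hequiv.trans h⟩, fun h => ?_⟩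
  have h : {v | r w v} = {v | r w' v} := h
  show w' ∈ {v | r w v}
  exact h ▸ hequiv.refl w'

variable {r hequiv hcong}

theorem Recognizes.mem_iff_of_isFactorization [Inhabited A] {L : Set (ℕ → A)}
    (hrec : Recognizes r L)
    {u e : (concatCon r hequiv hcong).Quotient} {x x' : ℕ → A}
    (hx : IsFactorization (concatCon r hequiv hcong).mk' u e x)
    (hx' : IsFactorization (concatCon r hequiv hcong).mk' u e x') : x ∈ L ↔ x' ∈ L := by
  obtain ⟨t, ht, ht0, hu⟩ := hx
  obtain ⟨t', ht', ht0', hu'⟩ := hx'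
  have := hrec _ _ (infOftenNonempty_seg x ht) (infOftenNonempty_seg x' ht') fun k =>
    (concatCon r hequiv hcong).eq.1 ((hu k).trans (hu' k).symm)
  rwa [omegaConcat_seg x ht ht0, omegaConcat_seg x' ht' ht0'] at this

end Congruence

/-- A language recognized by a finite-index ω-congruence is ω-regular. -/
theorem statement2 [Inhabited A] (L : Set (ℕ → A)) (r : List A → List A → Prop)
    (hequiv : Equivalence r) (hfin : FiniteIndex r) (hcong : ConcatCongr r)
    (hrec : Recognizes r L) :
    OmegaRegular L := by
  set c := concatCon r hequiv hcong
  have := finite_concatCon_quotient r hequiv hcong hfin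
  let P := {p : c.Quotient × c.Quotient // ∃ y ∈ L, IsFactorization c.mk' p.1 p.2 y}
  refine OmegaRegular.of_buchiAccepts (S := P × (c.Quotient × c.Quotient × Bool)) _ _ _ fun x =>
    (Iff.trans ?_ (buchiAccepts_prod_iff (fun p : P => {(p.1.1, 1, true)})
      (fun p => cutStep c.mk' p.1.2) (fun _ => {s | s.2.2 = true}) x).symm)
  constructor
  · intro hx
    obtain ⟨u, e, hue⟩ := exists_isFactorization c.mk' x
    exact ⟨⟨(u, e), x, hx, hue⟩, hue.buchiAccepts⟩
  · rintro ⟨⟨⟨u, e⟩, y, hy, hue⟩, hx⟩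
    exact (hrec.mem_iff_of_isFactorization (.of_buchiAccepts hx) hue).2 hy
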